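/- Let p, q ∈ ℕ with p ≤ q + 1, let a_1, …, a_p ∈ ℂ[[x]] and b_1, …, b_{q+1} ∈ ℂ[[x]] with b_{q+1} = 1, such that no constant coefficient (b_i)_{[0]} is a nonpositive integer, and let z ∈ ℂ[[x]]. For k ∈ ℕ set T(k) = z^k · ∏_{i=1}^p (a_i)_k · ∏_{i=1}^{q+1} ((b_i)_k)^{-1} ∈ ℂ[[x]], where (a)_k = ∏_{j=0}^{k−1} (a + j) is the rising factorial of a power series. Let N ∈ ℕ be such that Re((b_i)_{[0]}) + N > 0 for every i, and set D = |z| · ∏_{i=1}^p (1 + |a_i − b_i| · 𝓡(b_i + N)^{-1}) · ∏_{i=p+1}^{q+1} 𝓡(b_i + N)^{-1} ∈ ℝ[[x]]. If D_{[0]} < 1, then for every m ∈ ℕ the series ∑_{k=N}^∞ |T(k)_{[m]}| converges and ∑_{k=N}^∞ |T(k)_{[m]}| ≤ (𝓡(1 − D)^{-1} · |T(N)|)_{[m]}. -/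

import Mathlib

/-!
For `n ≥ N` the ratio `T(n+1) = T(n) · z ∏_{i<p} (a_i+n)/(b_i+n) ∏_{p≤i≤q} 1/(b_i+n)`
is majorized coefficientwise by `D`: writing `(a+n)/(b+n) = 1 + (a-b)/(b+n)`, it suffices
that `|(b+n)⁻¹| ≤ 𝓡(b+n)⁻¹ ≤ 𝓡(b+N)⁻¹`, which follows from the recursion for the
coefficients of an inverse because `|b_[0]+n|` grows with `n`. Hence `|T(N+k)| ≤ |T(N)| D^k`,
and the partial sums of the tail are bounded by
`|T(N)| ∑_{k<n} D^k ≤ |T(N)| (1-D)⁻¹ = |T(N)| 𝓡(1-D)⁻¹`.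
-/

open Finset

/-- For `A ∈ ℂ[[x]]`, `|A| ∈ ℝ[[x]]` is the series whose `k`-th coefficient
is `|A_[k]|`. -/
noncomputable def psAbs (A : PowerSeries ℂ) : PowerSeries ℝ :=
  PowerSeries.mk fun k => ‖PowerSeries.coeff k A‖

/-- For `B ∈ ℂ[[x]]`, `𝓡(B) ∈ ℝ[[x]]` has constant coefficient `|B_[0]|`
and `k`-th coefficient `−|B_[k]|` for `k ≥ 1`. -/
noncomputable def psRC (B : PowerSeries ℂ) : PowerSeries ℝ :=
  PowerSeries.mk fun k =>
    if k = 0 then ‖PowerSeries.coeff 0 B‖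
    else -‖PowerSeries.coeff k B‖

/-- The analogous operation `𝓡` for real power series. -/
noncomputable def psRR (B : PowerSeries ℝ) : PowerSeries ℝ :=
  PowerSeries.mk fun k =>
    if k = 0 then |PowerSeries.coeff 0 B|
    else -|PowerSeries.coeff k B|

/-- The rising factorial `(A)_k = A (A+1) ⋯ (A+k−1)` of a power series. -/
noncomputable def psRising (A : PowerSeries ℂ) (k : ℕ) : PowerSeries ℂ :=
  ∏ j ∈ Finset.range k, (A + (j : PowerSeries ℂ))

open PowerSeries

def PowerSeries.MajorizedBy {R : Type*} [SeminormedRing R] (A : R⟦X⟧) (M : ℝ⟦X⟧) : Prop :=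
  ∀ n, ‖coeff n A‖ ≤ coeff n M

local infix:50 " ≪ " => PowerSeries.MajorizedBy

namespace PowerSeries

section Majorant

variable {R : Type*} [SeminormedRing R]

theorem MajorizedBy.coeff_nonneg {A : R⟦X⟧} {M : ℝ⟦X⟧} (h : A ≪ M) (n : ℕ) :
    0 ≤ coeff n M :=
  (norm_nonneg _).trans (h n)

/-- For a real series, `M ≪ M` says that the coefficients of `M` are nonnegative. -/
theorem MajorizedBy.self {A : R⟦X⟧} {M : ℝ⟦X⟧} (h : A ≪ M) : M ≪ M := fun n => by
  rw [Real.norm_of_nonneg (h.coeff_nonneg n)]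

theorem MajorizedBy.add {A B : R⟦X⟧} {M M' : ℝ⟦X⟧} (hA : A ≪ M) (hB : B ≪ M') :
    A + B ≪ M + M' := fun n => by
  simpa only [map_add] using (norm_add_le _ _).trans (add_le_add (hA n) (hB n))

theorem MajorizedBy.mul {A B : R⟦X⟧} {M M' : ℝ⟦X⟧} (hA : A ≪ M) (hB : B ≪ M') :
    A * B ≪ M * M' := fun n => by
  rw [coeff_mul, coeff_mul]
  refine (norm_sum_le _ _).trans (sum_le_sum fun x _ => (norm_mul_le _ _).trans ?_)
  exact mul_le_mul (hA x.1) (hB x.2) (norm_nonneg _) (hA.coeff_nonneg _)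

theorem majorizedBy_one [NormOneClass R] : (1 : R⟦X⟧) ≪ 1 := fun n => by
  rw [coeff_one, coeff_one]
  split_ifs <;> simp

theorem MajorizedBy.pow [NormOneClass R] {A : R⟦X⟧} {M : ℝ⟦X⟧} (h : A ≪ M) (k : ℕ) :
    A ^ k ≪ M ^ k := by
  induction k with
  | zero => simpa using majorizedBy_one
  | succ k ih => simpa only [pow_succ] using ih.mul h

theorem MajorizedBy.prod {S : Type*} [SeminormedCommRing S] [NormOneClass S] {ι : Type*}
    {s : Finset ι} {f : ι → S⟦X⟧} {g : ι → ℝ⟦X⟧} (h : ∀ i ∈ s, f i ≪ g i) :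
    ∏ i ∈ s, f i ≪ ∏ i ∈ s, g i := by
  simpa only [Prod.fst_prod, Prod.snd_prod] using
    prod_induction (fun i => (f i, g i)) (fun x => x.1 ≪ x.2) (fun _ _ => MajorizedBy.mul)
      majorizedBy_one h

theorem majorizedBy_mul_pow_of_succ {f g : ℕ → R⟦X⟧} {M D : ℝ⟦X⟧}
    (hf : ∀ k, f (k + 1) = f k * g k) (h0 : f 0 ≪ M) (hg : ∀ k, g k ≪ D) (k : ℕ) :
    f k ≪ M * D ^ k := by
  induction k with
  | zero => simpa using h0
  | succ k ih => simpa only [hf, pow_succ, mul_assoc] using ih.mul (hg k)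

/-- The recursion for `coeff n A⁻¹` is dominated termwise by the one for `coeff n M⁻¹`. -/
theorem majorizedBy_inv {𝕜 : Type*} [NormedField 𝕜] {A : 𝕜⟦X⟧} {M : ℝ⟦X⟧}
    (hM : 0 < constantCoeff M) (h0 : constantCoeff M ≤ ‖constantCoeff A‖)
    (h : ∀ n ≠ 0, ‖coeff n A‖ ≤ -coeff n M) : A⁻¹ ≪ M⁻¹ := by
  intro n
  induction n using Nat.strong_induction_on with
  | _ n ih =>
  rw [coeff_inv, coeff_inv]
  split_ifs with hn
  · rw [norm_inv]
    exact inv_anti₀ hM h0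
  rw [norm_mul, norm_neg, norm_inv, neg_mul, ← mul_neg, ← sum_neg_distrib]
  refine mul_le_mul (inv_anti₀ hM h0) ((norm_sum_le _ _).trans (sum_le_sum fun x hx => ?_))
    (norm_nonneg _) (inv_nonneg.2 hM.le)
  split_ifs with hx2
  · have hx1 : x.1 ≠ 0 := by
      rw [HasAntidiagonal.mem_antidiagonal] at hx
      omega
    rw [norm_mul, ← neg_mul]
    exact mul_le_mul (h _ hx1) (ih _ hx2) (norm_nonneg _) ((norm_nonneg _).trans (h _ hx1))
  · simp

theorem summable_norm_coeff_of_majorizedBy_geom {f : ℕ → R⟦X⟧} {M D : ℝ⟦X⟧}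
    (hD : D ≪ D) (hD1 : constantCoeff D < 1) (hf : ∀ k, f k ≪ M * D ^ k) (m : ℕ) :
    Summable (fun k => ‖coeff m (f k)‖) ∧
      ∑' k, ‖coeff m (f k)‖ ≤ coeff m ((1 - D)⁻¹ * M) := by
  have hM : M ≪ M := by simpa using (hf 0).self
  have hinv : (1 - D)⁻¹ ≪ (1 - D)⁻¹ :=
    majorizedBy_inv (by simpa using hD1) (Real.le_norm_self _) fun n hn => by
      simp [coeff_one, hn, Real.norm_of_nonneg (hD.coeff_nonneg n)]
  have hgeom (n : ℕ) :
      (1 - D)⁻¹ * M = ∑ k ∈ range n, M * D ^ k + (1 - D)⁻¹ * M * D ^ n := by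
    have hne : constantCoeff (1 - D) ≠ 0 := by simpa [sub_eq_zero] using hD1.ne'
    rw [← mul_sum]
    linear_combination (-(1 - D)⁻¹ * M) * geom_sum_mul_neg D n
      + (M * ∑ k ∈ range n, D ^ k) * PowerSeries.mul_inv_cancel _ hne
  have hpartial (n : ℕ) : ∑ k ∈ range n, ‖coeff m (f k)‖ ≤ coeff m ((1 - D)⁻¹ * M) :=
    calc ∑ k ∈ range n, ‖coeff m (f k)‖ ≤ ∑ k ∈ range n, coeff m (M * D ^ k) :=
          sum_le_sum fun k _ => hf k m
      _ = coeff m (∑ k ∈ range n, M * D ^ k) := (map_sum _ _ _).symm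
      _ ≤ coeff m ((1 - D)⁻¹ * M) := by
          rw [hgeom n, map_add]
          exact le_add_of_nonneg_right (((hinv.mul hM).mul (hD.pow n)).coeff_nonneg m)
  exact ⟨summable_of_sum_range_le (fun _ => norm_nonneg _) hpartial,
    Real.tsum_le_of_sum_range_le (fun _ => norm_nonneg _) hpartial⟩

end Majorant

theorem coeff_add_natCast_of_ne_zero {R : Type*} [Semiring R] (B : R⟦X⟧) (c : ℕ) {n : ℕ}
    (hn : n ≠ 0) : coeff n (B + (c : R⟦X⟧)) = coeff n B := by
  rw [← map_natCast (C (R := R)) c, map_add, coeff_C, if_neg hn, add_zero]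

end PowerSeries

theorem Complex.norm_add_ofReal_le_of_le {w : ℂ} {s t : ℝ} (hs : 0 ≤ w.re + s)
    (hst : s ≤ t) : ‖w + s‖ ≤ ‖w + t‖ := by
  rw [← sq_le_sq₀ (norm_nonneg _) (norm_nonneg _), Complex.sq_norm, Complex.sq_norm,
    Complex.normSq_apply, Complex.normSq_apply]
  simp only [Complex.add_re, Complex.ofReal_re, Complex.add_im, Complex.ofReal_im, add_zero]
  nlinarith

theorem majorizedBy_psAbs (A : ℂ⟦X⟧) : A ≪ psAbs A := fun n => by simp [psAbs]

theorem constantCoeff_psRC (B : ℂ⟦X⟧) : constantCoeff (psRC B) = ‖constantCoeff B‖ := by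
  rw [← coeff_zero_eq_constantCoeff_apply]
  simp [psRC]

theorem coeff_psRC_of_ne_zero (B : ℂ⟦X⟧) {n : ℕ} (hn : n ≠ 0) :
    coeff n (psRC B) = -‖coeff n B‖ := by
  simp [psRC, hn]

theorem psRR_eq_self {B : ℝ⟦X⟧} (h0 : 0 ≤ constantCoeff B)
    (h : ∀ n ≠ 0, coeff n B ≤ 0) : psRR B = B := by
  ext n
  rcases eq_or_ne n 0 with rfl | hn
  · simp [psRR, abs_of_nonneg h0]
  · simp [psRR, hn, abs_of_nonpos (h n hn)]

section Shift

variable {b : ℂ⟦X⟧} {N n : ℕ}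

theorem norm_constantCoeff_add_natCast_le (hb : 0 < (constantCoeff b).re + N) (hn : N ≤ n) :
    ‖constantCoeff (b + (N : ℂ⟦X⟧))‖ ≤ ‖constantCoeff (b + (n : ℂ⟦X⟧))‖ := by
  simpa using Complex.norm_add_ofReal_le_of_le (w := constantCoeff b) hb.le (Nat.cast_le.2 hn)

theorem norm_constantCoeff_add_natCast_pos (hb : 0 < (constantCoeff b).re + N) (hn : N ≤ n) :
    0 < ‖constantCoeff (b + (n : ℂ⟦X⟧))‖ :=
  (hb.trans_le (by simpa using Complex.re_le_norm (constantCoeff (b + (N : ℂ⟦X⟧))))).trans_le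
    (norm_constantCoeff_add_natCast_le hb hn)

theorem inv_add_natCast_majorizedBy (hb : 0 < (constantCoeff b).re + N) (hn : N ≤ n) :
    (b + (n : ℂ⟦X⟧))⁻¹ ≪ (psRC (b + (N : ℂ⟦X⟧)))⁻¹ := by
  refine majorizedBy_inv ?_ ?_ fun j hj => ?_
  · rw [constantCoeff_psRC]
    exact norm_constantCoeff_add_natCast_pos hb le_rfl
  · rw [constantCoeff_psRC]
    exact norm_constantCoeff_add_natCast_le hb hn
  · rw [coeff_psRC_of_ne_zero _ hj, neg_neg, coeff_add_natCast_of_ne_zero _ _ hj,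
      coeff_add_natCast_of_ne_zero _ _ hj]

theorem add_natCast_mul_inv_majorizedBy (a : ℂ⟦X⟧) (hb : 0 < (constantCoeff b).re + N)
    (hn : N ≤ n) : (a + (n : ℂ⟦X⟧)) * (b + (n : ℂ⟦X⟧))⁻¹ ≪
      1 + psAbs (a - b) * (psRC (b + (N : ℂ⟦X⟧)))⁻¹ := by
  have hne := norm_pos_iff.1 (norm_constantCoeff_add_natCast_pos hb hn)
  have hsplit : (a + (n : ℂ⟦X⟧)) * (b + (n : ℂ⟦X⟧))⁻¹ =
      1 + (a - b) * (b + (n : ℂ⟦X⟧))⁻¹ := by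
    linear_combination PowerSeries.mul_inv_cancel _ hne
  rw [hsplit]
  exact majorizedBy_one.add ((majorizedBy_psAbs _).mul (inv_add_natCast_majorizedBy hb hn))

end Shift

theorem psRising_succ (A : ℂ⟦X⟧) (k : ℕ) :
    psRising A (k + 1) = psRising A k * (A + (k : ℂ⟦X⟧)) :=
  prod_range_succ _ _

section Hypergeometric

variable (p q : ℕ) (a b : ℕ → ℂ⟦X⟧) (z : ℂ⟦X⟧)

noncomputable def hypergeomTerm (k : ℕ) : ℂ⟦X⟧ :=
  z ^ k * (∏ i ∈ range p, psRising (a i) k) * ∏ i ∈ range (q + 1), (psRising (b i) k)⁻¹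

noncomputable def hypergeomRatio (n : ℕ) : ℂ⟦X⟧ :=
  z * (∏ i ∈ range p, (a i + (n : ℂ⟦X⟧)) * (b i + (n : ℂ⟦X⟧))⁻¹) *
    ∏ i ∈ Ico p (q + 1), (b i + (n : ℂ⟦X⟧))⁻¹

variable {p q a b z}

theorem hypergeomTerm_succ (hpq : p ≤ q + 1) (n : ℕ) :
    hypergeomTerm p q a b z (n + 1) = hypergeomTerm p q a b z n * hypergeomRatio p q a b z n := by
  have hden : ∏ i ∈ range (q + 1), (psRising (b i) (n + 1))⁻¹ =
      (∏ i ∈ range (q + 1), (psRising (b i) n)⁻¹) *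
        ((∏ i ∈ range p, (b i + (n : ℂ⟦X⟧))⁻¹) *
          ∏ i ∈ Ico p (q + 1), (b i + (n : ℂ⟦X⟧))⁻¹) := by
    rw [prod_range_mul_prod_Ico _ hpq, ← prod_mul_distrib]
    refine prod_congr rfl fun i _ => ?_
    rw [psRising_succ, PowerSeries.mul_inv_rev, mul_comm]
  rw [hypergeomTerm, hypergeomTerm, hypergeomRatio, hden]
  simp only [psRising_succ, prod_mul_distrib, pow_succ]
  ring

theorem hypergeomRatio_majorizedBy {N n : ℕ} (hpq : p ≤ q + 1)
    (hN : ∀ i ≤ q, 0 < (constantCoeff (b i)).re + N) (hn : N ≤ n) :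
    hypergeomRatio p q a b z n ≪
      psAbs z *
          (∏ i ∈ range p, (1 + psAbs (a i - b i) * (psRC (b i + (N : ℂ⟦X⟧)))⁻¹)) *
        ∏ i ∈ Ico p (q + 1), (psRC (b i + (N : ℂ⟦X⟧)))⁻¹ := by
  refine ((majorizedBy_psAbs z).mul (MajorizedBy.prod fun i hi => ?_)).mul
    (MajorizedBy.prod fun i hi => ?_)
  · exact add_natCast_mul_inv_majorizedBy _ (hN i (by rw [mem_range] at hi; omega)) hn
  · exact inv_add_natCast_majorizedBy (hN i (by rw [mem_Ico] at hi; omega)) hn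

end Hypergeometric

theorem pFq_tail_bound_powerSeries_general (p q : ℕ) (hpq : p ≤ q + 1)
    (a b : ℕ → PowerSeries ℂ)
    (z : PowerSeries ℂ) (N : ℕ)
    (hN : ∀ i ≤ q, 0 < (PowerSeries.constantCoeff (b i)).re + N)
    (T : ℕ → PowerSeries ℂ)
    (hT : ∀ k, T k = z ^ k * (∏ i ∈ range p, psRising (a i) k)
        * ∏ i ∈ range (q + 1), (psRising (b i) k)⁻¹)
    (D : PowerSeries ℝ)
    (hD : D = psAbs z
        * (∏ i ∈ range p,
            (1 + psAbs (a i - b i) * (psRC (b i + (N : PowerSeries ℂ)))⁻¹))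
        * ∏ i ∈ Finset.Ico p (q + 1), (psRC (b i + (N : PowerSeries ℂ)))⁻¹)
    (hD1 : PowerSeries.constantCoeff D < 1) :
    ∀ m : ℕ,
      Summable (fun k : ℕ => ‖PowerSeries.coeff m (T (N + k))‖) ∧
      ∑' k : ℕ, ‖PowerSeries.coeff m (T (N + k))‖ ≤
        PowerSeries.coeff m ((psRR (1 - D))⁻¹ * psAbs (T N)) := by
  obtain rfl : T = hypergeomTerm p q a b z := funext hT
  have hratio (k : ℕ) : hypergeomRatio p q a b z (N + k) ≪ D :=
    hD ▸ hypergeomRatio_majorizedBy hpq hN (Nat.le_add_right N k)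
  have hterm (k : ℕ) :
      hypergeomTerm p q a b z (N + k) ≪ psAbs (hypergeomTerm p q a b z N) * D ^ k :=
    majorizedBy_mul_pow_of_succ (f := fun k => hypergeomTerm p q a b z (N + k))
      (fun k => hypergeomTerm_succ hpq (N + k)) (majorizedBy_psAbs _) hratio k
  have hDD : D ≪ D := (hratio 0).self
  rw [psRR_eq_self (by simpa using hD1.le) fun n hn => by simp [coeff_one, hn, hDD.coeff_nonneg n]]
  exact summable_norm_coeff_of_majorizedBy_geom hDD hD1 hterm

/-- Tail bound for hypergeometric series with power series parameters and
argument (the power series version of Theorem 4.1 of the paper). -/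
theorem pFq_tail_bound_powerSeries (p q : ℕ) (hpq : p ≤ q + 1)
    (a b : ℕ → PowerSeries ℂ)
    (hblast : b q = 1)
    (hbint : ∀ i ≤ q, ∀ m : ℕ, PowerSeries.constantCoeff (b i) ≠ -(m : ℂ))
    (z : PowerSeries ℂ) (N : ℕ)
    (hN : ∀ i ≤ q, 0 < (PowerSeries.constantCoeff (b i)).re + N)
    (T : ℕ → PowerSeries ℂ)
    (hT : ∀ k, T k = z ^ k * (∏ i ∈ range p, psRising (a i) k)
        * ∏ i ∈ range (q + 1), (psRising (b i) k)⁻¹)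
    (D : PowerSeries ℝ)
    (hD : D = psAbs z
        * (∏ i ∈ range p,
            (1 + psAbs (a i - b i) * (psRC (b i + (N : PowerSeries ℂ)))⁻¹))
        * ∏ i ∈ Finset.Ico p (q + 1), (psRC (b i + (N : PowerSeries ℂ)))⁻¹)
    (hD1 : PowerSeries.constantCoeff D < 1) :
    ∀ m : ℕ,
      Summable (fun k : ℕ => ‖PowerSeries.coeff m (T (N + k))‖) ∧
      ∑' k : ℕ, ‖PowerSeries.coeff m (T (N + k))‖ ≤
        PowerSeries.coeff m ((psRR (1 - D))⁻¹ * psAbs (T N)) :=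
  pFq_tail_bound_powerSeries_general p q hpq a b z N hN T hT D hD hD1
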